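/- arXiv:1110.0631 — 4 statements merged into one kernel-verified Lean document; each statement's English description precedes it below -/
import Mathlib

section
/- Let P be a normal program with the bounded-term-size property. Then: (1) any atom true in WFM(P) has a finite stratum and is computed by a finite number of applications of the operator True^P; (2) WFM(P) contains a finite number of true atoms; and (3) WFM(P) has only a finite number of strata containing true atoms, i.e., the condition T^P_I ≠ ∅ can hold at only finitely many iterations of the iterated fixed point. -/
namespace DistSem

/-! ### First-order syntax

Terms over a type `F` of function symbols (constants are 0-ary applications),
atoms over a type `P` of predicate symbols.  A language with a finite number of
function and constant symbols is modelled by a `[Finite F]` hypothesis (and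
finitely many predicates by `[Finite P]`). -/

inductive FOTerm (F : Type) : Type
  | var : ℕ → FOTerm F
  | app : F → List (FOTerm F) → FOTerm F

namespace FOTerm

variable {F : Type}

/-- The size of a term. -/
noncomputable def size (t : FOTerm F) : ℕ := sizeOf t

/-- `HasVar t n` holds iff the variable `n` occurs in `t`. -/
inductive HasVar : FOTerm F → ℕ → Prop
  | var (n : ℕ) : HasVar (.var n) n
  | app {f : F} {args : List (FOTerm F)} {t : FOTerm F} {n : ℕ} :
      t ∈ args → HasVar t n → HasVar (.app f args) n

/-- A term is ground if it contains no variables. -/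
inductive Ground : FOTerm F → Prop
  | app {f : F} {args : List (FOTerm F)} : (∀ t ∈ args, Ground t) → Ground (.app f args)

/-- Applying a substitution (an assignment of terms to variables) to a term. -/
def subst (θ : ℕ → FOTerm F) : FOTerm F → FOTerm F
  | .var n => θ n
  | .app f args => .app f (args.attach.map fun t => subst θ t.1)
decreasing_by
  have := List.sizeOf_lt_of_mem t.2
  simp only [FOTerm.app.sizeOf_spec]
  omega

end FOTerm

/-- A logical atom: a predicate symbol applied to a list of terms. -/
structure FOAtom (F P : Type) : Type where
  pred : P
  args : List (FOTerm F)

namespace FOAtom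

variable {F P : Type}

def subst (θ : ℕ → FOTerm F) (A : FOAtom F P) : FOAtom F P :=
  ⟨A.pred, A.args.map (FOTerm.subst θ)⟩

def Ground (A : FOAtom F P) : Prop := ∀ t ∈ A.args, t.Ground

def HasVar (A : FOAtom F P) (n : ℕ) : Prop := ∃ t ∈ A.args, t.HasVar n

/-- `A` is a ground instance of the (possibly non-ground) atom `Q`. -/
def InstanceOf (Q A : FOAtom F P) : Prop := A.Ground ∧ (A = Q ∨ ∃ θ, A = Q.subst θ)

end FOAtom

/-- A literal: an atom or a negated atom. -/
inductive Lit (F P : Type) : Type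
  | pos (A : FOAtom F P)
  | neg (A : FOAtom F P)

namespace Lit

variable {F P : Type}

def subst (θ : ℕ → FOTerm F) : Lit F P → Lit F P
  | pos A => pos (A.subst θ)
  | neg A => neg (A.subst θ)

def Ground : Lit F P → Prop
  | pos A => A.Ground
  | neg A => A.Ground

/-- The atom of a literal. -/
def atom : Lit F P → FOAtom F P
  | pos A => A
  | neg A => A

def HasVar (l : Lit F P) (n : ℕ) : Prop := l.atom.HasVar n

end Lit

/-- A normal clause `head ← body`. -/
structure Clause (F P : Type) : Type where
  head : FOAtom F P
  body : List (Lit F P)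

namespace Clause

variable {F P : Type}

def subst (θ : ℕ → FOTerm F) (C : Clause F P) : Clause F P :=
  ⟨C.head.subst θ, C.body.map (Lit.subst θ)⟩

def Ground (C : Clause F P) : Prop := C.head.Ground ∧ ∀ L ∈ C.body, L.Ground

def HasVar (C : Clause F P) (n : ℕ) : Prop :=
  C.head.HasVar n ∨ ∃ L ∈ C.body, L.HasVar n

/-- `Cg` is a ground instance of the clause `C`. -/
def Instance (C Cg : Clause F P) : Prop :=
  Cg.Ground ∧ (Cg = C ∨ ∃ θ, Cg = C.subst θ)

end Clause

/-- A normal logic program, viewed as a set of clauses.  (Finiteness of the set of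
clauses of a user program is imposed by explicit hypotheses; ground instantiations
and worlds of LPADs are again of this type, but may be infinite.) -/
abbrev NormalProgram (F P : Type) := Set (Clause F P)

variable {F P : Type}

/-- The ground instantiation `ground(P)` of a program. -/
def instancesOf (Pr : NormalProgram F P) : Set (Clause F P) :=
  {Cg | ∃ C ∈ Pr, C.Instance Cg}

/-! ### Three-valued interpretations and the iterated fixed point characterization
of the well-founded semantics (Przymusinski 1989). -/

/-- A 3-valued interpretation `⟨Tr; Fa⟩`. -/
structure Interp (F P : Type) : Type where
  tr : Set (FOAtom F P)
  fa : Set (FOAtom F P)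

/-- A literal is true in `I`, or is a (positive) member of `Tr`. -/
def litTrueIn (I : Interp F P) (Tr : Set (FOAtom F P)) : Lit F P → Prop
  | .pos A => A ∈ I.tr ∨ A ∈ Tr
  | .neg A => A ∈ I.fa

/-- A literal is true in the 3-valued interpretation `I`. -/
def litTrue (I : Interp F P) : Lit F P → Prop
  | .pos A => A ∈ I.tr
  | .neg A => A ∈ I.fa

/-- A literal is false in `I`, or is a (positive) member of `Fa`. -/
def litFalseIn (I : Interp F P) (Fa : Set (FOAtom F P)) : Lit F P → Prop
  | .pos A => A ∈ I.fa ∨ A ∈ Fa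
  | .neg A => A ∈ I.tr

/-- The operator `True^P_I(Tr)`: the set of (ground) atoms `A` not true in `I` for
which there are a clause of `P` and a ground substitution `θ` yielding a ground
instance with head `A` all of whose body literals are true in `I` or belong to
`Tr`. -/
def TrueOp (Pr : NormalProgram F P) (I : Interp F P) (Tr : Set (FOAtom F P)) :
    Set (FOAtom F P) :=
  {A | A ∉ I.tr ∧ ∃ Cg ∈ instancesOf Pr, Cg.head = A ∧ ∀ L ∈ Cg.body, litTrueIn I Tr L}

/-- The operator `False^P_I(Fa)`: the set of ground atoms `A` not false in `I` such
that every ground instance of a clause of `P` with head `A` has a body literal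
false in `I` or belonging to `Fa`. -/
def FalseOp (Pr : NormalProgram F P) (I : Interp F P) (Fa : Set (FOAtom F P)) :
    Set (FOAtom F P) :=
  {A | A ∉ I.fa ∧ A.Ground ∧
    ∀ Cg ∈ instancesOf Pr, Cg.head = A → ∃ L ∈ Cg.body, litFalseIn I Fa L}

/-- `T^P_I`: the least fixed point of `True^P_I` (starting from `∅`), presented via
Knaster–Tarski as the intersection of the prefixed points. -/
def Tset (Pr : NormalProgram F P) (I : Interp F P) : Set (FOAtom F P) :=
  ⋂₀ {S | TrueOp Pr I S ⊆ S}

/-- `F^P_I`: the greatest fixed point of `False^P_I` (starting from the Herbrand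
base), presented via Knaster–Tarski as the union of the postfixed points. -/
def Fset (Pr : NormalProgram F P) (I : Interp F P) : Set (FOAtom F P) :=
  ⋃₀ {S | S ⊆ FalseOp Pr I S}

/-- The finite iterates of `True^P_I` starting from `∅`. -/
def TrueIter (Pr : NormalProgram F P) (I : Interp F P) : ℕ → Set (FOAtom F P)
  | 0 => ∅
  | n + 1 => TrueOp Pr I (TrueIter Pr I n)

/-- The iterated fixed point: `WFM_0 = ⟨∅;∅⟩`,
`WFM_{α+1} = WFM_α ∪ ⟨T_{WFM_α}; F_{WFM_α}⟩`, with unions at limit ordinals. -/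
noncomputable def WFMStage (Pr : NormalProgram F P) : Ordinal.{0} → Interp F P
  | o =>
    ⟨{A | ∃ o' : Ordinal.{0}, ∃ _ : o' < o,
        A ∈ (WFMStage Pr o').tr ∪ Tset Pr (WFMStage Pr o')},
     {A | ∃ o' : Ordinal.{0}, ∃ _ : o' < o,
        A ∈ (WFMStage Pr o').fa ∪ Fset Pr (WFMStage Pr o')}⟩
  termination_by o => o

/-- The well-founded model `WFM(P)`, i.e. the limit of the iterated fixed point. -/
noncomputable def WFM (Pr : NormalProgram F P) : Interp F P :=
  ⟨{A | ∃ o : Ordinal.{0}, A ∈ (WFMStage Pr o).tr},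
   {A | ∃ o : Ordinal.{0}, A ∈ (WFMStage Pr o).fa}⟩

end DistSem

namespace DistSem

variable {F P : Type}

/-! ### The bounded-term-size property (Definition 4 of the paper),
stated via the sizes of the grounding substitutions used by `True^P_I`. -/

/-- `Cg` is a ground clause instance used to produce an atom in `TrueOp Pr I Tr`:
it is a ground instance of a clause of `Pr`, its head is not already true in `I`,
and all of its body literals are true in `I` or belong to `Tr`. -/
def UsedInstance (Pr : NormalProgram F P) (I : Interp F P) (Tr : Set (FOAtom F P))
    (Cg : Clause F P) : Prop :=
  Cg ∈ instancesOf Pr ∧ Cg.Ground ∧ Cg.head ∉ I.tr ∧ ∀ L ∈ Cg.body, litTrueIn I Tr L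

/-- The application `True^P_I(Tr)` has the bounded-term-size property with bound
`L`: the size of every ground substitution `θ` used to produce an atom in
`True^P_I(Tr)` is less than `L` (i.e. `θ` maps every variable of the clause being
instantiated to a term of size `< L`). -/
def BoundedApp (Pr : NormalProgram F P) (I : Interp F P) (Tr : Set (FOAtom F P))
    (L : ℕ) : Prop :=
  ∀ C ∈ Pr, ∀ θ : ℕ → FOTerm F,
    UsedInstance Pr I Tr (C.subst θ) → ∀ n, C.HasVar n → (θ n).size < L

/-- `P` has the bounded-term-size property: every application of `True^P_I` used to
construct `WFM(P)` has the bounded-term-size property with the same bound `L`.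
(The applications used are those with `I = WFM_α` for some stage `α` and with `Tr`
one of the sets arising in the iteration of the least fixed point of `True^P_I`;
all such sets are subsets of `T^P_I`, and by monotonicity of `True^P_I` it is
equivalent to quantify over all of them.) -/
def BTS (Pr : NormalProgram F P) : Prop :=
  ∃ L : ℕ, ∀ (o : Ordinal.{0}) (Tr : Set (FOAtom F P)),
    Tr ⊆ Tset Pr (WFMStage Pr o) → BoundedApp Pr (WFMStage Pr o) Tr L

end DistSem

/-!
Every atom made true at some stage is the head of a ground instance `C θ` of a clause `C`
of the finite program, with `θ` of size `< L` on the variables of `C`; since there are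
finitely many function symbols, these heads form a finite set `S`. The sets `T^P_I`
added at distinct stages are pairwise disjoint subsets of `S`, so only finitely many of
them are nonempty. Past the last finite stage `n` with `T^P_I ≠ ∅`, two consecutive steps
add no true atoms; the second of them then adds no false atoms either, so the iteration is
stationary from stage `n + 2` on, and every nonempty `T^P_I` sits at a finite stage.
-/

theorem Set.Finite.setOf_list_length_le {α : Type*} {s : Set α} (hs : s.Finite) (K : ℕ) :
    {l : List α | l.length ≤ K ∧ ∀ x ∈ l, x ∈ s}.Finite := by
  have := hs.to_subtype
  refine ((List.finite_length_le s K).image (List.map (↑))).subset ?_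
  rintro l ⟨hlen, hmem⟩
  lift l to List s using hmem
  exact ⟨l, by simpa using hlen, rfl⟩

theorem List.sizeOf_map_le_mul {α β : Type*} [SizeOf α] [SizeOf β] (f : α → β) {B : ℕ}
    (hB : 1 ≤ B) (l : List α) (h : ∀ a ∈ l, sizeOf (f a) ≤ sizeOf a * B) :
    sizeOf (l.map f) ≤ sizeOf l * B := by
  induction l with
  | nil => simpa using hB
  | cons a l ih =>
    have ha := h a List.mem_cons_self
    have hl := ih fun a' ha' => h a' (List.mem_cons_of_mem _ ha')
    simp only [List.map_cons, List.cons.sizeOf_spec]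
    nlinarith

namespace DistSem

variable {F P : Type}

attribute [ext] Interp

namespace FOTerm

theorem one_le_sizeOf (t : FOTerm F) : 1 ≤ sizeOf t := by
  cases t <;> simp

theorem length_lt_sizeOf (l : List (FOTerm F)) : l.length < sizeOf l := by
  induction l with
  | nil => simp
  | cons t l ih =>
    have := one_le_sizeOf t
    simp only [List.cons.sizeOf_spec, List.length_cons]
    omega

theorem finite_setOf_sizeOf_le [Finite F] (M : ℕ) : {t : FOTerm F | sizeOf t ≤ M}.Finite := by
  induction M with
  | zero => exact Set.finite_empty.subset fun t (ht : sizeOf t ≤ 0) =>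
      absurd (one_le_sizeOf t) (by omega)
  | succ M ih =>
    refine (((Set.finite_Iic M).image var).union ((Set.finite_univ.prod
      (ih.setOf_list_length_le M)).image fun p => app p.1 p.2)).subset ?_
    rintro (n | ⟨f, args⟩) ht
    · exact Or.inl ⟨n, by simp_all; omega, rfl⟩
    · refine Or.inr ⟨(f, args), ⟨trivial, ?_, fun t ht' => ?_⟩, rfl⟩
      · have := length_lt_sizeOf args
        simp_all; omega
      · have := List.sizeOf_lt_of_mem ht'
        simp_all; omega

theorem subst_app (θ : ℕ → FOTerm F) (f : F) (args : List (FOTerm F)) :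
    subst θ (app f args) = app f (args.map (subst θ)) := by
  rw [subst]
  simp

theorem sizeOf_subst_le {B : ℕ} (hB : 1 ≤ B) (θ : ℕ → FOTerm F) :
    ∀ t : FOTerm F, (∀ n, t.HasVar n → sizeOf (θ n) ≤ B) → sizeOf (t.subst θ) ≤ sizeOf t * B
  | var n, h => by
    have := h n (.var n)
    simp only [subst, var.sizeOf_spec]
    nlinarith
  | app f args, h => by
    have hargs := List.sizeOf_map_le_mul (subst θ) hB args fun t ht =>
      sizeOf_subst_le hB θ t fun n hn => h n (.app ht hn)
    simp only [subst_app, app.sizeOf_spec]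
    nlinarith
termination_by t => sizeOf t
decreasing_by
  have := List.sizeOf_lt_of_mem ht
  simp only [app.sizeOf_spec]
  omega

end FOTerm

theorem FOAtom.finite_image_subst [Finite F] (Q : FOAtom F P) (L : ℕ) :
    ((fun θ => Q.subst θ) '' {θ : ℕ → FOTerm F | ∀ n, Q.HasVar n → (θ n).size < L}).Finite := by
  refine (((FOTerm.finite_setOf_sizeOf_le (sizeOf Q.args * (L + 1))).setOf_list_length_le
    Q.args.length).image (FOAtom.mk Q.pred)).subset ?_
  rintro _ ⟨θ, hθ, rfl⟩
  refine ⟨_, ⟨by simp, ?_⟩, rfl⟩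
  simp only [List.mem_map]
  rintro _ ⟨t, ht, rfl⟩
  calc sizeOf (t.subst θ) ≤ sizeOf t * (L + 1) :=
        FOTerm.sizeOf_subst_le (by omega) θ t fun n hn => by
          have := hθ n ⟨t, ht, hn⟩
          unfold FOTerm.size at this
          omega
    _ ≤ sizeOf Q.args * (L + 1) := Nat.mul_le_mul_right _ (List.sizeOf_lt_of_mem ht).le

section Operators

variable {Pr : NormalProgram F P} {I : Interp F P}

theorem litTrueIn_mono {Tr Tr' : Set (FOAtom F P)} (h : Tr ⊆ Tr') {L : Lit F P}
    (hL : litTrueIn I Tr L) : litTrueIn I Tr' L := by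
  cases L with
  | pos A => exact hL.imp id (@h A)
  | neg A => exact hL

theorem litFalseIn_mono {Fa Fa' : Set (FOAtom F P)} (h : Fa ⊆ Fa') {L : Lit F P}
    (hL : litFalseIn I Fa L) : litFalseIn I Fa' L := by
  cases L with
  | pos A => exact hL.imp id (@h A)
  | neg A => exact hL

theorem trueOp_mono : Monotone (TrueOp Pr I) := by
  rintro Tr Tr' h A ⟨hA, Cg, hCg, hhead, hbody⟩
  exact ⟨hA, Cg, hCg, hhead, fun L hL => litTrueIn_mono h (hbody L hL)⟩

theorem falseOp_mono : Monotone (FalseOp Pr I) := by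
  rintro Fa Fa' h A ⟨hA, hg, hcl⟩
  refine ⟨hA, hg, fun Cg hCg hhead => ?_⟩
  obtain ⟨L, hL, hLf⟩ := hcl Cg hCg hhead
  exact ⟨L, hL, litFalseIn_mono h hLf⟩

variable (Pr I) in
def trueOpHom : Set (FOAtom F P) →o Set (FOAtom F P) := ⟨TrueOp Pr I, trueOp_mono⟩

variable (Pr I) in
def falseOpHom : Set (FOAtom F P) →o Set (FOAtom F P) := ⟨FalseOp Pr I, falseOp_mono⟩

theorem trueOp_tset : TrueOp Pr I (Tset Pr I) = Tset Pr I :=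
  (trueOpHom Pr I).map_lfp

theorem falseOp_fset : FalseOp Pr I (Fset Pr I) = Fset Pr I :=
  (falseOpHom Pr I).map_gfp

theorem notMem_tr_of_mem_tset {A : FOAtom F P} (hA : A ∈ Tset Pr I) : A ∉ I.tr := by
  rw [← trueOp_tset] at hA
  exact hA.1

theorem trueIter_mono : Monotone (TrueIter Pr I) := by
  refine monotone_nat_of_le_succ fun k => ?_
  induction k with
  | zero => exact Set.empty_subset _
  | succ k ih => exact trueOp_mono ih

theorem eventually_litTrueIn_of_iUnion {s : ℕ → Set (FOAtom F P)} (hs : Monotone s)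
    {L : Lit F P} (hL : litTrueIn I (⋃ k, s k) L) : ∀ᶠ k in Filter.atTop, litTrueIn I (s k) L := by
  cases L with
  | pos A =>
    rcases hL with hA | hA
    · exact Filter.Eventually.of_forall fun _ => Or.inl hA
    · obtain ⟨k, hk⟩ := Set.mem_iUnion.1 hA
      exact Filter.eventually_atTop.2 ⟨k, fun n hn => Or.inr (hs hn hk)⟩
  | neg A => exact Filter.Eventually.of_forall fun _ => hL

/-- Compactness of `True^P_I`: clause bodies are finite, so `T^P_I` is reached after `ω`
iterations. -/
theorem tset_subset_iUnion_trueIter : Tset Pr I ⊆ ⋃ k, TrueIter Pr I k := by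
  refine (trueOpHom Pr I).lfp_le ?_
  rintro A ⟨hA, Cg, hCg, hhead, hbody⟩
  obtain ⟨k, hk⟩ := ((Cg.body.finite_toSet.eventually_all).2 fun L hL =>
    eventually_litTrueIn_of_iUnion trueIter_mono (hbody L hL)).exists
  exact Set.mem_iUnion.2 ⟨k + 1, hA, Cg, hCg, hhead, hk⟩

theorem litFalseIn_of_extend {X Y : Set (FOAtom F P)} {L : Lit F P}
    (hL : litFalseIn ⟨I.tr, I.fa ∪ X⟩ Y L) : litFalseIn I (X ∪ Y) L := by
  cases L with
  | pos A =>
    simp only [litFalseIn, Set.mem_union] at hL ⊢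
    tauto
  | neg A => exact hL

/-- Adding `F^P_I` to the false atoms creates no new unfounded atoms: anything unfounded
relative to the extension is, together with `F^P_I`, unfounded relative to `I`. -/
theorem fset_extend_eq_empty : Fset Pr ⟨I.tr, I.fa ∪ Fset Pr I⟩ = ∅ := by
  have hG : Fset Pr I ∪ Fset Pr ⟨I.tr, I.fa ∪ Fset Pr I⟩ ⊆ Fset Pr I := by
    refine (falseOpHom Pr I).le_gfp ?_
    rintro A (hA | hA)
    · rw [← falseOp_fset] at hA
      exact falseOp_mono Set.subset_union_left hA
    · rw [← falseOp_fset] at hA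
      obtain ⟨hfa, hg, hcl⟩ := hA
      refine ⟨fun h => hfa (Or.inl h), hg, fun Cg hCg hhead => ?_⟩
      obtain ⟨L, hL, hLf⟩ := hcl Cg hCg hhead
      exact ⟨L, hL, litFalseIn_of_extend hLf⟩
  refine Set.eq_empty_of_forall_notMem fun A hA => ?_
  have hA' := hG (Or.inr hA)
  rw [← falseOp_fset] at hA
  exact hA.1 (Or.inr hA')

end Operators

section Stages

variable {Pr : NormalProgram F P} {A : FOAtom F P} {o o' : Ordinal.{0}}

theorem mem_WFMStage_tr : A ∈ (WFMStage Pr o).tr ↔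
    ∃ o' < o, A ∈ (WFMStage Pr o').tr ∪ Tset Pr (WFMStage Pr o') := by
  rw [WFMStage]
  simp only [exists_prop]
  rfl

theorem mem_WFMStage_fa : A ∈ (WFMStage Pr o).fa ↔
    ∃ o' < o, A ∈ (WFMStage Pr o').fa ∪ Fset Pr (WFMStage Pr o') := by
  rw [WFMStage]
  simp only [exists_prop]
  rfl

theorem union_tset_subset_WFMStage_tr (h : o' < o) :
    (WFMStage Pr o').tr ∪ Tset Pr (WFMStage Pr o') ⊆ (WFMStage Pr o).tr :=
  fun _ hA => mem_WFMStage_tr.2 ⟨o', h, hA⟩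

theorem union_fset_subset_WFMStage_fa (h : o' < o) :
    (WFMStage Pr o').fa ∪ Fset Pr (WFMStage Pr o') ⊆ (WFMStage Pr o).fa :=
  fun _ hA => mem_WFMStage_fa.2 ⟨o', h, hA⟩

theorem WFMStage_tr_mono : Monotone fun o => (WFMStage Pr o).tr := fun _ _ h _ hA =>
  let ⟨o', ho', hA⟩ := mem_WFMStage_tr.1 hA
  mem_WFMStage_tr.2 ⟨o', ho'.trans_le h, hA⟩

theorem WFMStage_fa_mono : Monotone fun o => (WFMStage Pr o).fa := fun _ _ h _ hA =>
  let ⟨o', ho', hA⟩ := mem_WFMStage_fa.1 hA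
  mem_WFMStage_fa.2 ⟨o', ho'.trans_le h, hA⟩

theorem WFMStage_succ : WFMStage Pr (o + 1) =
    ⟨(WFMStage Pr o).tr ∪ Tset Pr (WFMStage Pr o),
      (WFMStage Pr o).fa ∪ Fset Pr (WFMStage Pr o)⟩ := by
  ext A
  · refine ⟨fun hA => ?_, fun hA => mem_WFMStage_tr.2 ⟨o, Order.lt_add_one_iff.2 le_rfl, hA⟩⟩
    obtain ⟨o', ho', hA'⟩ := mem_WFMStage_tr.1 hA
    rcases (Order.lt_add_one_iff.1 ho').lt_or_eq with h | rfl
    · exact Or.inl (union_tset_subset_WFMStage_tr h hA')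
    · exact hA'
  · refine ⟨fun hA => ?_, fun hA => mem_WFMStage_fa.2 ⟨o, Order.lt_add_one_iff.2 le_rfl, hA⟩⟩
    obtain ⟨o', ho', hA'⟩ := mem_WFMStage_fa.1 hA
    rcases (Order.lt_add_one_iff.1 ho').lt_or_eq with h | rfl
    · exact Or.inl (union_fset_subset_WFMStage_fa h hA')
    · exact hA'

theorem exists_mem_tset_of_mem_WFMStage_tr (hA : A ∈ (WFMStage Pr o).tr) :
    ∃ o' < o, A ∈ Tset Pr (WFMStage Pr o') := by
  induction o using WellFoundedLT.induction with
  | _ o ih =>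
    obtain ⟨o', ho', hA | hA⟩ := mem_WFMStage_tr.1 hA
    · obtain ⟨o'', ho'', hA⟩ := ih o' ho' hA
      exact ⟨o'', ho''.trans ho', hA⟩
    · exact ⟨o', ho', hA⟩

theorem WFMStage_eq_of_le {o₀ : Ordinal.{0}} (hT : Tset Pr (WFMStage Pr o₀) = ∅)
    (hF : Fset Pr (WFMStage Pr o₀) = ∅) (h : o₀ ≤ o) : WFMStage Pr o = WFMStage Pr o₀ := by
  induction o using WellFoundedLT.induction with
  | _ o ih =>
    rcases h.lt_or_eq with hlt | rfl
    · ext A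
      · refine ⟨fun hA => ?_, fun hA => WFMStage_tr_mono hlt.le hA⟩
        obtain ⟨o', ho', hA⟩ := mem_WFMStage_tr.1 hA
        rcases lt_or_ge o' o₀ with h' | h'
        · exact union_tset_subset_WFMStage_tr h' hA
        · rwa [ih o' ho' h', hT, Set.union_empty] at hA
      · refine ⟨fun hA => ?_, fun hA => WFMStage_fa_mono hlt.le hA⟩
        obtain ⟨o', ho', hA⟩ := mem_WFMStage_fa.1 hA
        rcases lt_or_ge o' o₀ with h' | h'
        · exact union_fset_subset_WFMStage_fa h' hA
        · rwa [ih o' ho' h', hF, Set.union_empty] at hA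
    · rfl

theorem pairwise_disjoint_tset_WFMStage :
    Pairwise fun o o' => Disjoint (Tset Pr (WFMStage Pr o)) (Tset Pr (WFMStage Pr o')) := by
  refine (pairwise_disjoint_on _).2 fun o o' h => Set.disjoint_left.2 fun A hA hA' => ?_
  exact notMem_tr_of_mem_tset hA' (union_tset_subset_WFMStage_tr h (Or.inr hA))

theorem finite_setOf_tset_WFMStage_ne_empty {S : Set (FOAtom F P)} (hS : S.Finite)
    (h : ∀ o, Tset Pr (WFMStage Pr o) ⊆ S) : {o | Tset Pr (WFMStage Pr o) ≠ ∅}.Finite := by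
  simp only [← Set.nonempty_iff_ne_empty]
  exact ((Set.finite_iUnion_iff pairwise_disjoint_tset_WFMStage).1
    (hS.subset (Set.iUnion_subset h))).2

/-- Two consecutive finite steps adding no true atoms make the iteration stationary. -/
theorem exists_nat_forall_tset_WFMStage_ne_empty_lt
    (hfin : {o | Tset Pr (WFMStage Pr o) ≠ ∅}.Finite) :
    ∃ N : ℕ, ∀ o, Tset Pr (WFMStage Pr o) ≠ ∅ → o < N := by
  obtain ⟨b, hb⟩ :=
    (hfin.preimage (Nat.cast_injective.injOn (f := ((↑) : ℕ → Ordinal.{0})))).bddAbove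
  have hempty (n : ℕ) (hn : b < n) : Tset Pr (WFMStage Pr n) = ∅ :=
    by_contra fun h => (hb h).not_gt hn
  have hT : Tset Pr (WFMStage Pr ((b + 2 : ℕ) : Ordinal.{0})) = ∅ := hempty _ (by omega)
  have hF : Fset Pr (WFMStage Pr ((b + 2 : ℕ) : Ordinal.{0})) = ∅ := by
    rw [Nat.cast_succ, WFMStage_succ, hempty (b + 1) (by omega), Set.union_empty]
    exact fset_extend_eq_empty
  refine ⟨b + 2, fun o ho => lt_of_not_ge fun h => ho ?_⟩
  rwa [WFMStage_eq_of_le hT hF h]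

end Stages

section BoundedTermSize

variable {Pr : NormalProgram F P} {I : Interp F P} {L : ℕ}

variable (Pr L) in
/-- `insert C.head` accounts for a ground clause used as its own instance. -/
def boundedHeads : Set (FOAtom F P) :=
  ⋃ C ∈ Pr, insert C.head
    ((fun θ => C.head.subst θ) '' {θ | ∀ n, C.head.HasVar n → (θ n).size < L})

theorem finite_boundedHeads [Finite F] (hfin : Pr.Finite) (L : ℕ) : (boundedHeads Pr L).Finite :=
  hfin.biUnion fun C _ => (C.head.finite_image_subst L).insert C.head

theorem tset_subset_boundedHeads (hL : BoundedApp Pr I (Tset Pr I) L) :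
    Tset Pr I ⊆ boundedHeads Pr L := by
  intro A hA
  rw [← trueOp_tset] at hA
  obtain ⟨hnot, Cg, ⟨C, hC, hg, rfl | ⟨θ, rfl⟩⟩, rfl, hbody⟩ := hA
  · exact Set.mem_biUnion hC (Set.mem_insert _ _)
  · have hused : UsedInstance Pr I (Tset Pr I) (C.subst θ) :=
      ⟨⟨C, hC, hg, Or.inr ⟨θ, rfl⟩⟩, hg, hnot, hbody⟩
    exact Set.mem_biUnion hC
      (Set.mem_insert_of_mem _ ⟨θ, fun n hn => hL C hC θ hused n (Or.inl hn), rfl⟩)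

end BoundedTermSize

theorem bts_finite_strata_and_finitely_many_true_atoms_general
    {F P : Type} [Finite F]
    (Pr : NormalProgram F P) (hfin : Pr.Finite) (hbts : BTS Pr) :
    (∀ A ∈ (WFM Pr).tr,
        (∃ n : ℕ, A ∈ (WFMStage Pr (n : Ordinal.{0})).tr) ∧
        (∃ (n : ℕ) (k : ℕ), A ∈ TrueIter Pr (WFMStage Pr (n : Ordinal.{0})) k)) ∧
    (WFM Pr).tr.Finite ∧
    {o : Ordinal.{0} | Tset Pr (WFMStage Pr o) ≠ ∅}.Finite := by
  obtain ⟨L, hL⟩ := hbts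
  have hbounded (o : Ordinal.{0}) : Tset Pr (WFMStage Pr o) ⊆ boundedHeads Pr L :=
    tset_subset_boundedHeads (hL o _ subset_rfl)
  have hstrata := finite_setOf_tset_WFMStage_ne_empty (finite_boundedHeads hfin L) hbounded
  obtain ⟨N, hN⟩ := exists_nat_forall_tset_WFMStage_ne_empty_lt hstrata
  refine ⟨fun A ⟨o, hA⟩ => ?_, (finite_boundedHeads hfin L).subset fun A ⟨o, hA⟩ => ?_, hstrata⟩
  · obtain ⟨o', -, hA'⟩ := exists_mem_tset_of_mem_WFMStage_tr hA
    obtain ⟨m, rfl⟩ := Ordinal.lt_omega0.1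
      ((hN o' (Set.nonempty_of_mem hA').ne_empty).trans (Ordinal.natCast_lt_omega0 N))
    exact ⟨⟨m + 1, union_tset_subset_WFMStage_tr (by exact_mod_cast m.lt_succ_self) (Or.inr hA')⟩,
      m, Set.mem_iUnion.1 (tset_subset_iUnion_trueIter hA')⟩
  · obtain ⟨o', -, hA'⟩ := exists_mem_tset_of_mem_WFMStage_tr hA
    exact hbounded o' hA'

/-- Lemma 1 of the paper.  Let `P` be a normal program (a finite
set of clauses over a language with finitely many function and constant symbols)
with the bounded-term-size property.  Then:
(1) any atom true in `WFM(P)` has a finite stratum (it already appears at a stage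
    indexed by a natural number) and is computed by a finite number of
    applications of the operator `True^P` (it appears in a finite iterate of
    `True^P_I` from `∅` at some stage `I`);
(2) `WFM(P)` contains a finite number of true atoms; and
(3) `WFM(P)` has only a finite number of strata containing true atoms: the
    condition `T^P_I ≠ ∅` holds at only finitely many iterations of the iterated
    fixed point. -/
theorem bts_finite_strata_and_finitely_many_true_atoms
    {F P : Type} [Finite F] [Finite P]
    (Pr : NormalProgram F P) (hfin : Pr.Finite) (hbts : BTS Pr) :
    (∀ A ∈ (WFM Pr).tr,
        (∃ n : ℕ, A ∈ (WFMStage Pr (n : Ordinal.{0})).tr) ∧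
        (∃ (n : ℕ) (k : ℕ), A ∈ TrueIter Pr (WFMStage Pr (n : Ordinal.{0})) k)) ∧
    (WFM Pr).tr.Finite ∧
    {o : Ordinal.{0} | Tset Pr (WFMStage Pr o) ≠ ∅}.Finite :=
  bts_finite_strata_and_finitely_many_true_atoms_general Pr hfin hbts

end DistSem
end

section
/- For an LPAD T, the collection Ω_T = {ω_K : K a finite set of finite composite choices} is an algebra of subsets of the set W_T of worlds of T: it contains W_T itself and is closed under complementation and finite unions (hence under finite intersections). -/
namespace DistSem

variable {F P : Type}

/-- The application `True^P_I(Tr)` has the bounded-term-size property with bound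
`L`: every ground clause instance (equivalently, every grounding substitution)
used to produce an atom in `True^P_I(Tr)` has size less than `L`. -/
def BoundedAppSize (Pr : NormalProgram F P) (I : Interp F P) (Tr : Set (FOAtom F P))
    (L : ℕ) : Prop :=
  ∀ Cg, UsedInstance Pr I Tr Cg → sizeOf Cg < L

/-- The program `Pr` has the bounded-term-size property: every application of
`True^P_I` used to construct `WFM(P)` is bounded with the same bound `L`.  (The
applications used are those with `I = WFM_α` for some stage `α` and `Tr` a set
arising in the iteration of the least fixed point of `True^P_I`; all such sets are
subsets of `T^P_I`.) -/
def BTSProg (Pr : NormalProgram F P) : Prop :=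
  ∃ L : ℕ, ∀ (o : Ordinal.{0}) (Tr : Set (FOAtom F P)),
    Tr ⊆ Tset Pr (WFMStage Pr o) → BoundedAppSize Pr (WFMStage Pr o) Tr L

end DistSem

namespace DistSem

/-! ### Logic Programs with Annotated Disjunctions and the distribution semantics -/

/-- A clause of a Logic Program with Annotated Disjunctions:
`H1:α1 ∨ … ∨ Hn:αn ← L1,…,Lm`. -/
structure LPADClause (F P : Type) : Type where
  head : List (FOAtom F P × ℝ)
  body : List (Lit F P)

namespace LPADClause

variable {F P : Type}

def subst (θ : ℕ → FOTerm F) (C : LPADClause F P) : LPADClause F P :=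
  ⟨C.head.map fun h => (h.1.subst θ, h.2), C.body.map (Lit.subst θ)⟩

def Ground (C : LPADClause F P) : Prop :=
  (∀ h ∈ C.head, (h.1 : FOAtom F P).Ground) ∧ ∀ L ∈ C.body, L.Ground

/-- `Cg` is a ground instance of the LPAD clause `C`. -/
def Instance (C Cg : LPADClause F P) : Prop :=
  Cg.Ground ∧ (Cg = C ∨ ∃ θ, Cg = C.subst θ)

/-- The sum of the head annotations of a clause. -/
noncomputable def annSum (C : LPADClause F P) : ℝ := (C.head.map Prod.snd).sum

/-- Well-formed annotations: each `αi ∈ [0,1]` and `Σ αi ≤ 1`. -/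
def AnnOK (C : LPADClause F P) : Prop :=
  (∀ h ∈ C.head, 0 ≤ h.2 ∧ h.2 ≤ 1) ∧ annSum C ≤ 1

end LPADClause

/-- An LPAD: a finite set of annotated disjunctive clauses with well-formed
annotations. -/
structure LPAD (F P : Type) : Type where
  clauses : Set (LPADClause F P)
  finite : clauses.Finite
  annOK : ∀ C ∈ clauses, C.AnnOK

variable {F P : Type}

/-- The ground instantiation of a set of LPAD clauses. -/
def lground (S : Set (LPADClause F P)) : Set (LPADClause F P) :=
  {Cg | ∃ C ∈ S, C.Instance Cg}

/-- An atomic choice `(Cθ, i)`: for the ground clause instance `Cθ`, head atom `i`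
is chosen.  The index `i = |head(C)|` denotes the implicit extra atom `null`
(available only when the annotations sum to less than 1). -/
abbrev AtomicChoice (F P : Type) := LPADClause F P × ℕ

/-- The atomic choice is a legitimate one for the ground instantiation of `S`. -/
def ValidChoice (S : Set (LPADClause F P)) (ac : AtomicChoice F P) : Prop :=
  ac.1 ∈ lground S ∧
    (ac.2 < ac.1.head.length ∨ (ac.2 = ac.1.head.length ∧ ac.1.annSum < 1))

/-- A set of atomic choices is consistent: at most one head is selected for each
ground clause instance. -/
def Consistent (κ : Set (AtomicChoice F P)) : Prop :=
  ∀ ac ∈ κ, ∀ ac' ∈ κ, ac.1 = ac'.1 → ac.2 = ac'.2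

/-- A composite choice for (the ground instantiation of) `S`: a consistent set of
atomic choices. -/
def Composite (S : Set (LPADClause F P)) (κ : Set (AtomicChoice F P)) : Prop :=
  (∀ ac ∈ κ, ValidChoice S ac) ∧ Consistent κ

/-- A selection: a composite choice containing an atomic choice for *every* ground
clause instance. -/
def Selection (S : Set (LPADClause F P)) (σ : Set (AtomicChoice F P)) : Prop :=
  Composite S σ ∧ ∀ Cg ∈ lground S, ∃ i, (Cg, i) ∈ σ

/-- The set of worlds of `S`; a world is identified with the selection that
determines it. -/
def Worlds (S : Set (LPADClause F P)) : Set (Set (AtomicChoice F P)) :=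
  {σ | Selection S σ}

/-- The normal logic program determined by a selection: for each atomic choice
selecting an actual head atom (not `null`), the corresponding non-disjunctive
ground clause. -/
def progOf (σ : Set (AtomicChoice F P)) : NormalProgram F P :=
  {C | ∃ ac ∈ σ, ∃ h : ac.2 < ac.1.head.length,
        C = ⟨(ac.1.head.get ⟨ac.2, h⟩).1, ac.1.body⟩}

/-- The ground atom `A` is true in the world `σ` (i.e. in the well-founded model of
its program). -/
def TrueInWorld (σ : Set (AtomicChoice F P)) (A : FOAtom F P) : Prop :=
  A ∈ (WFM (progOf σ)).tr

/-- `ω_κ`: the set of worlds whose selection extends `κ`. -/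
def omegaC (S : Set (LPADClause F P)) (κ : Set (AtomicChoice F P)) :
    Set (Set (AtomicChoice F P)) :=
  {σ ∈ Worlds S | κ ⊆ σ}

/-- `ω_K = ⋃_{κ ∈ K} ω_κ`. -/
def omegaK (S : Set (LPADClause F P)) (K : Set (Set (AtomicChoice F P))) :
    Set (Set (AtomicChoice F P)) :=
  ⋃ κ ∈ K, omegaC S κ

/-- `κ` is an explanation for the ground atom `A`: `A` is true in every world of
`ω_κ`. -/
def Explanation (S : Set (LPADClause F P)) (κ : Set (AtomicChoice F P))
    (A : FOAtom F P) : Prop :=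
  Composite S κ ∧ ∀ σ ∈ omegaC S κ, TrueInWorld σ A

/-- `K` is covering for `A`: every world in which `A` is true belongs to `ω_K`. -/
def CoveringFor (S : Set (LPADClause F P)) (K : Set (Set (AtomicChoice F P)))
    (A : FOAtom F P) : Prop :=
  ∀ σ ∈ Worlds S, TrueInWorld σ A → σ ∈ omegaK S K

/-- The LPAD `T` is sound: every world has a two-valued well-founded model. -/
def LPAD.Sound (T : LPAD F P) : Prop :=
  ∀ σ ∈ Worlds T.clauses, ∀ A : FOAtom F P, A.Ground →
    A ∈ (WFM (progOf σ)).tr ∨ A ∈ (WFM (progOf σ)).fa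

/-- The ground LPAD given by the clause set `S` has the bounded-term-size property:
every world of it does. -/
def BTSL (S : Set (LPADClause F P)) : Prop :=
  ∀ σ ∈ Worlds S, BTSProg (progOf σ)

/-- The LPAD `T` has the bounded-term-size property. -/
def LPAD.BTS (T : LPAD F P) : Prop := BTSL T.clauses

end DistSem

namespace DistSem

variable {F P : Type}

/-! ### The probability measure of the distribution semantics -/

/-- The probability of an atomic choice: the annotation of the selected head atom
(or `1 - Σ αi` for the implicit `null` atom). -/
noncomputable def choiceProb (ac : AtomicChoice F P) : ℝ :=
  if h : ac.2 < ac.1.head.length then (ac.1.head.get ⟨ac.2, h⟩).2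
  else 1 - ac.1.annSum

/-- The probability `P(κ)` of a (finite) composite choice: the product of the
probabilities of its atomic choices. -/
noncomputable def compProb (κ : Set (AtomicChoice F P)) : ℝ :=
  ∏ᶠ ac ∈ κ, choiceProb ac

/-- Two composite choices are incompatible: their union is inconsistent, i.e. they
select different heads for some common ground clause instance. -/
def Incompatible (κ₁ κ₂ : Set (AtomicChoice F P)) : Prop :=
  ∃ (Cg : LPADClause F P) (i j : ℕ), (Cg, i) ∈ κ₁ ∧ (Cg, j) ∈ κ₂ ∧ i ≠ j

/-- A set of composite choices is mutually incompatible. -/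
def MutuallyIncompatible (K : Set (Set (AtomicChoice F P))) : Prop :=
  ∀ κ₁ ∈ K, ∀ κ₂ ∈ K, κ₁ ≠ κ₂ → Incompatible κ₁ κ₂

/-- The algebra `Ω_T`: the sets of worlds identified by finite sets of finite
composite choices. -/
def OmegaAlg (S : Set (LPADClause F P)) : Set (Set (Set (AtomicChoice F P))) :=
  {W | ∃ K, K.Finite ∧ (∀ κ ∈ K, κ.Finite ∧ Composite S κ) ∧ W = omegaK S K}

/-- The probability measure `μ : Ω_T → ℝ`, defined — using Poole's results that a
finite mutually incompatible set of finite composite choices describing the same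
set of worlds always exists and that any two such sets give equal sums — by
`μ(ω_K) = Σ_{κ ∈ K'} P(κ)` for such a `K'`. -/
noncomputable def mu (S : Set (LPADClause F P))
    (W : Set (Set (AtomicChoice F P))) : ℝ := by
  classical
  exact if h : ∃ K, K.Finite ∧ (∀ κ ∈ K, κ.Finite ∧ Composite S κ) ∧
      MutuallyIncompatible K ∧ omegaK S K = W
    then ∑ᶠ κ ∈ h.choose, compProb κ
    else 0

end DistSem

/-! A world lies in `ω_κ` iff its selection extends `κ`, so `ω_{κ₁} ∩ ω_{κ₂} = ω_{κ₁ ∪ κ₂}`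
(empty when `κ₁ ∪ κ₂` is inconsistent), and a world avoids `ω_κ` iff for some `(C, i) ∈ κ`
it selects another head `j ≠ i` of `C`, i.e. lies in `ω_{{(C, j)}}`.  Hence intersections
and complements of sets `ω_K` are again of this form, with finitely many finite choices
because each clause has finitely many heads. -/

namespace DistSem

variable {F P : Type} {S : Set (LPADClause F P)}

theorem Consistent.mono {κ σ : Set (AtomicChoice F P)} (h : Consistent σ) (hsub : κ ⊆ σ) :
    Consistent κ :=
  fun ac hac ac' hac' => h ac (hsub hac) ac' (hsub hac')

theorem composite_singleton {ac : AtomicChoice F P} (h : ValidChoice S ac) :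
    Composite S {ac} :=
  ⟨fun _ hac => hac ▸ h, fun _ hac _ hac' _ => by rw [hac, hac']⟩

theorem Composite.union {κ₁ κ₂ : Set (AtomicChoice F P)} (h₁ : Composite S κ₁)
    (h₂ : Composite S κ₂) (h : Consistent (κ₁ ∪ κ₂)) : Composite S (κ₁ ∪ κ₂) :=
  ⟨fun ac hac => hac.elim (h₁.1 ac) (h₂.1 ac), h⟩

theorem finite_setOf_validChoice (C : LPADClause F P) :
    {j | ValidChoice S (C, j)}.Finite :=
  (Set.finite_Iic C.head.length).subset fun _ ⟨_, hj⟩ => hj.elim le_of_lt fun h => h.1.le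

theorem omegaC_empty : omegaC S ∅ = Worlds S := by
  simp [omegaC]

theorem omegaC_union (κ₁ κ₂ : Set (AtomicChoice F P)) :
    omegaC S (κ₁ ∪ κ₂) = omegaC S κ₁ ∩ omegaC S κ₂ := by
  ext σ
  simp only [omegaC, Set.mem_ofPred_eq, Set.mem_inter_iff, Set.union_subset_iff]
  tauto

theorem omegaC_eq_empty_of_not_consistent {κ : Set (AtomicChoice F P)}
    (h : ¬ Consistent κ) : omegaC S κ = ∅ :=
  Set.eq_empty_of_forall_notMem fun _ hσ => h (hσ.1.1.2.mono hσ.2)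

theorem omegaK_sep_consistent (K : Set (Set (AtomicChoice F P))) :
    omegaK S {κ ∈ K | Consistent κ} = omegaK S K := by
  refine subset_antisymm (Set.biUnion_subset_biUnion_left (Set.sep_subset _ _)) ?_
  refine Set.iUnion₂_subset fun κ hκ σ hσ => Set.mem_biUnion ⟨hκ, ?_⟩ hσ
  by_contra h
  rw [omegaC_eq_empty_of_not_consistent h] at hσ
  exact hσ

theorem omegaK_inter_omegaK (K₁ K₂ : Set (Set (AtomicChoice F P))) :
    omegaK S K₁ ∩ omegaK S K₂ = omegaK S (Set.image2 (· ∪ ·) K₁ K₂) := by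
  simp only [omegaK, Set.biUnion_image2, omegaC_union, Set.iUnion₂_inter, Set.inter_iUnion₂]
  exact Set.iUnion₂_comm _

theorem worlds_diff_omegaC (κ : Set (AtomicChoice F P)) :
    Worlds S \ omegaC S κ = ⋃ ac ∈ κ, Worlds S \ omegaC S {ac} := by
  ext σ
  simp only [omegaC, Set.mem_sdiff, Set.mem_ofPred_eq, Set.singleton_subset_iff,
    Set.mem_iUnion, exists_prop, not_and, Set.not_subset]
  grind

theorem worlds_diff_omegaC_singleton {ac : AtomicChoice F P} (hac : ac.1 ∈ lground S) :
    Worlds S \ omegaC S {ac} =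
      omegaK S ((fun j => {(ac.1, j)}) '' {j | j ≠ ac.2 ∧ ValidChoice S (ac.1, j)}) := by
  ext σ
  simp only [omegaK, Set.biUnion_image, omegaC, Set.mem_sdiff, Set.mem_ofPred_eq,
    Set.singleton_subset_iff, Set.mem_iUnion, exists_prop, not_and]
  constructor
  · rintro ⟨hσ, hacσ⟩
    obtain ⟨j, hj⟩ := hσ.2 ac.1 hac
    exact ⟨j, ⟨fun h => hacσ hσ (by rwa [h] at hj), hσ.1.1 _ hj⟩, hσ, hj⟩
  · rintro ⟨j, ⟨hne, -⟩, hσ, hj⟩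
    exact ⟨hσ, fun _ hacσ => hne (hσ.1.2 _ hj _ hacσ rfl)⟩

theorem empty_mem_omegaAlg : ∅ ∈ OmegaAlg S :=
  ⟨∅, Set.finite_empty, fun _ h => h.elim, by simp [omegaK]⟩

theorem worlds_mem_omegaAlg : Worlds S ∈ OmegaAlg S :=
  ⟨{∅}, Set.finite_singleton _, fun _ h => h ▸ ⟨Set.finite_empty, ⟨fun _ h => h.elim, fun _ h => h.elim⟩⟩,
    by simp [omegaK, omegaC_empty]⟩

theorem union_mem_omegaAlg {W₁ W₂ : Set (Set (AtomicChoice F P))}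
    (h₁ : W₁ ∈ OmegaAlg S) (h₂ : W₂ ∈ OmegaAlg S) : W₁ ∪ W₂ ∈ OmegaAlg S := by
  obtain ⟨K₁, hK₁, hK₁c, rfl⟩ := h₁
  obtain ⟨K₂, hK₂, hK₂c, rfl⟩ := h₂
  exact ⟨K₁ ∪ K₂, hK₁.union hK₂, fun κ hκ => hκ.elim (hK₁c κ) (hK₂c κ),
    (Set.biUnion_union K₁ K₂ _).symm⟩

theorem biUnion_mem_omegaAlg {ι : Type*} {s : Set ι} {f : ι → Set (Set (AtomicChoice F P))}
    (hs : s.Finite) (hf : ∀ i ∈ s, f i ∈ OmegaAlg S) : ⋃ i ∈ s, f i ∈ OmegaAlg S := by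
  induction s, hs using Set.Finite.induction_on with
  | empty => simpa using empty_mem_omegaAlg
  | @insert i t _ _ ih =>
    rw [Set.biUnion_insert]
    exact union_mem_omegaAlg (hf i (Set.mem_insert i t))
      (ih fun j hj => hf j (Set.mem_insert_of_mem i hj))

theorem inter_mem_omegaAlg {W₁ W₂ : Set (Set (AtomicChoice F P))}
    (h₁ : W₁ ∈ OmegaAlg S) (h₂ : W₂ ∈ OmegaAlg S) : W₁ ∩ W₂ ∈ OmegaAlg S := by
  obtain ⟨K₁, hK₁, hK₁c, rfl⟩ := h₁
  obtain ⟨K₂, hK₂, hK₂c, rfl⟩ := h₂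
  refine ⟨{κ ∈ Set.image2 (· ∪ ·) K₁ K₂ | Consistent κ}, (hK₁.image2 _ hK₂).sep _, ?_, ?_⟩
  · rintro _ ⟨⟨κ₁, hκ₁, κ₂, hκ₂, rfl⟩, hκ⟩
    exact ⟨(hK₁c κ₁ hκ₁).1.union (hK₂c κ₂ hκ₂).1, (hK₁c κ₁ hκ₁).2.union (hK₂c κ₂ hκ₂).2 hκ⟩
  · rw [omegaK_sep_consistent, omegaK_inter_omegaK]

theorem worlds_diff_omegaC_mem {κ : Set (AtomicChoice F P)} (hκ : κ.Finite)
    (hκc : Composite S κ) : Worlds S \ omegaC S κ ∈ OmegaAlg S := by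
  rw [worlds_diff_omegaC]
  refine biUnion_mem_omegaAlg hκ fun ac hac => ?_
  rw [worlds_diff_omegaC_singleton (hκc.1 ac hac).1]
  refine ⟨_, ((finite_setOf_validChoice ac.1).subset fun _ hj => hj.2).image _, ?_, rfl⟩
  rintro _ ⟨j, hj, rfl⟩
  exact ⟨Set.finite_singleton _, composite_singleton hj.2⟩

theorem worlds_diff_mem_omegaAlg {W : Set (Set (AtomicChoice F P))}
    (h : W ∈ OmegaAlg S) : Worlds S \ W ∈ OmegaAlg S := by
  obtain ⟨K, hK, hKc, rfl⟩ := h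
  induction K, hK using Set.Finite.induction_on with
  | empty => simpa [omegaK] using worlds_mem_omegaAlg
  | @insert κ K _ _ ih =>
    obtain ⟨hκ, hκc⟩ := hKc κ (Set.mem_insert κ K)
    rw [omegaK, Set.biUnion_insert, ← Set.sdiff_inter_sdiff]
    exact inter_mem_omegaAlg (worlds_diff_omegaC_mem hκ hκc)
      (ih fun κ' hκ' => hKc κ' (Set.mem_insert_of_mem κ hκ'))

/-- For an LPAD `T`, the collection
`Ω_T = {ω_K : K a finite set of finite composite choices}` is an algebra of
subsets of the set `W_T` of worlds of `T`: it contains `W_T` itself, and it is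
closed under complementation (relative to `W_T`) and under finite unions, hence
also under finite intersections. -/
theorem omegaAlg_is_algebra {F P : Type} (T : LPAD F P) :
    Worlds T.clauses ∈ OmegaAlg T.clauses ∧
    (∀ W ∈ OmegaAlg T.clauses, Worlds T.clauses \ W ∈ OmegaAlg T.clauses) ∧
    (∀ W₁ ∈ OmegaAlg T.clauses, ∀ W₂ ∈ OmegaAlg T.clauses,
      W₁ ∪ W₂ ∈ OmegaAlg T.clauses) ∧
    (∀ W₁ ∈ OmegaAlg T.clauses, ∀ W₂ ∈ OmegaAlg T.clauses,
      W₁ ∩ W₂ ∈ OmegaAlg T.clauses) :=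
  ⟨worlds_mem_omegaAlg, fun _ => worlds_diff_mem_omegaAlg,
    fun _ h₁ _ h₂ => union_mem_omegaAlg h₁ h₂, fun _ h₁ _ h₂ => inter_mem_omegaAlg h₁ h₂⟩

end DistSem
end

section
/- Let K be a set of explanations of an LPAD T and let M be a multivalued decision diagram representing the Boolean function f_K. Let K_M be the set of composite choices obtained by interpreting each path of M from the root to a 1-leaf as an explanation. Then K and K_M identify the same set of worlds, i.e., ω_K = ω_{K_M}. -/
namespace DistSem

/-! ### Multivalued decision diagrams -/

/-- A multivalued decision diagram over a type `V` of multivalued variables: at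
each inner node one multivalued variable is tested, with one child for each of its
values `0, 1, …`; the leaves are labelled `0` (`false`) or `1` (`true`). -/
inductive MDD (V : Type) : Type
  | leaf : Bool → MDD V
  | node : V → List (MDD V) → MDD V

namespace MDD

variable {V : Type}

/-- Evaluating an MDD under an assignment of values to the variables: traverse the
diagram from the root, at each node following the child corresponding to the value
of the variable tested there, and return the label of the leaf that is reached. -/
def eval (a : V → ℕ) : MDD V → Bool
  | .leaf b => b
  | .node v cs =>
      if h : a v < cs.length then eval a (cs.get ⟨a v, h⟩) else false
decreasing_by
  have := List.sizeOf_lt_of_mem (cs.get_mem ⟨a v, h⟩)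
  simp only [MDD.node.sizeOf_spec]
  omega

/-- `PathChoices M s`: `s` is the set of pairs `(variable, value)` read along some
path of `M` from the root to a leaf labelled 1. -/
inductive PathChoices : MDD V → Set (V × ℕ) → Prop
  | leaf : PathChoices (.leaf true) ∅
  | node {v : V} {cs : List (MDD V)} {i : ℕ} {m : MDD V} {s : Set (V × ℕ)} :
      cs[i]? = some m → PathChoices m s → PathChoices (.node v cs) (insert (v, i) s)

/-- The variable `v` is tested somewhere in the diagram. -/
inductive Occurs (v : V) : MDD V → Prop
  | here {cs : List (MDD V)} : Occurs v (.node v cs)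
  | child {w : V} {cs : List (MDD V)} {m : MDD V} :
      m ∈ cs → Occurs v m → Occurs v (.node w cs)

/-- The diagram is read-once: no variable is tested twice along a path (each
variable tested at a node does not occur below it). -/
inductive ReadOnce : MDD V → Prop
  | leaf (b : Bool) : ReadOnce (.leaf b)
  | node {v : V} {cs : List (MDD V)} :
      (∀ m ∈ cs, ReadOnce m) → (∀ m ∈ cs, ¬ Occurs v m) → ReadOnce (.node v cs)

end MDD

end DistSem

namespace DistSem

variable {F P : Type}

/-- The Boolean function `f_K` determined by a set `K` of composite choices: the
multivalued variables are the ground clause instances, the atomic choice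
`(Cθ, i)` is the equation `X_{Cθ} = i`, each composite choice is the conjunction
of its equations, and `f_K` is the disjunction over `K`. -/
def fK (K : Set (Set (AtomicChoice F P))) (a : LPADClause F P → ℕ) : Prop :=
  ∃ κ ∈ K, ∀ ac ∈ κ, a ac.1 = ac.2

/-- The assignment of values to the multivalued variables determined by a
selection: each ground clause instance is mapped to the index of the head chosen
for it. -/
noncomputable def assignOf (σ : Set (AtomicChoice F P)) : LPADClause F P → ℕ :=
  fun Cg => sInf {i | (Cg, i) ∈ σ}

/-- `K_M`: the set of composite choices obtained by reading each path of `M` from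
the root to a 1-leaf as an explanation. -/
def pathsK (M : MDD (LPADClause F P)) : Set (Set (AtomicChoice F P)) :=
  {κ | MDD.PathChoices M κ}

/-! A world `σ` extends an explanation `κ` exactly when the assignment read off `σ`
satisfies the equations of `κ`, provided every variable of `κ` not selected by `σ`
gets a value different from the one `κ` requires. For `κ ∈ K` this is automatic,
since a world selects every ground clause instance; for paths of `M` we give the
unselected variables the value `sizeOf M`, which exceeds every branch index of `M`.
With this one assignment, `ω_K` and `ω_{K_M}` are both read off `f_K` and `eval M`,
which agree because `M` represents `f_K`. -/

theorem _root_.List.length_lt_sizeOf {α : Type*} [SizeOf α] (l : List α) :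
    l.length < sizeOf l := by
  induction l with
  | nil => simp
  | cons a l ih => simp only [List.length_cons, List.cons.sizeOf_spec]; omega

namespace MDD

variable {V : Type}

theorem PathChoices.lt_sizeOf [SizeOf V] {M : MDD V} {κ : Set (V × ℕ)}
    (hM : PathChoices M κ) :
    ∀ p ∈ κ, p.2 < sizeOf M := by
  induction hM with
  | leaf => simp
  | @node v cs i m s hm _ ih =>
    have hi : i < cs.length := (List.getElem?_eq_some_iff.mp hm).1
    have hsize : sizeOf m < sizeOf cs := List.sizeOf_lt_of_mem (List.mem_of_getElem? hm)
    rintro p (rfl | hp)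
    · have := cs.length_lt_sizeOf
      simp only [node.sizeOf_spec]
      omega
    · have := ih p hp
      simp only [node.sizeOf_spec]
      omega

theorem eval_eq_true_of_pathChoices {a : V → ℕ} {M : MDD V} {κ : Set (V × ℕ)}
    (hM : PathChoices M κ) (ha : ∀ p ∈ κ, a p.1 = p.2) : M.eval a = true := by
  induction hM with
  | leaf => rw [eval]
  | @node v cs i m s hm _ ih =>
    obtain ⟨hi, rfl⟩ := List.getElem?_eq_some_iff.mp hm
    obtain rfl : a v = i := ha (v, i) (Set.mem_insert _ _)
    rw [eval, dif_pos hi]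
    exact ih fun p hp => ha p (Set.mem_insert_of_mem _ hp)

theorem exists_pathChoices_of_eval_eq_true {a : V → ℕ} :
    ∀ {M : MDD V}, M.eval a = true → ∃ κ, PathChoices M κ ∧ ∀ p ∈ κ, a p.1 = p.2
  | .leaf b, h => by
    rw [eval] at h
    exact h ▸ ⟨∅, .leaf, by simp⟩
  | .node v cs, h => by
    rw [eval] at h
    split_ifs at h with hv
    obtain ⟨κ, hκ, ha⟩ := exists_pathChoices_of_eval_eq_true h
    refine ⟨insert (v, a v) κ, .node (List.getElem?_eq_getElem hv) hκ, ?_⟩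
    rintro p (rfl | hp)
    exacts [rfl, ha p hp]
termination_by M => M
decreasing_by
  have := List.sizeOf_lt_of_mem (cs.get_mem ⟨a v, hv⟩)
  simp only [MDD.node.sizeOf_spec]
  omega

theorem eval_eq_true_iff {a : V → ℕ} {M : MDD V} :
    M.eval a = true ↔ ∃ κ, PathChoices M κ ∧ ∀ p ∈ κ, a p.1 = p.2 :=
  ⟨exists_pathChoices_of_eval_eq_true, fun ⟨_, hM, ha⟩ => eval_eq_true_of_pathChoices hM ha⟩

end MDD

noncomputable def assignOfDefault (σ : Set (AtomicChoice F P)) (d : ℕ) :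
    LPADClause F P → ℕ :=
  open Classical in fun Cg => if ∃ i, (Cg, i) ∈ σ then assignOf σ Cg else d

theorem assignOf_eq_of_mem {σ : Set (AtomicChoice F P)} (hσ : Consistent σ)
    {Cg : LPADClause F P} {i : ℕ} (h : (Cg, i) ∈ σ) : assignOf σ Cg = i := by
  have : {j | (Cg, j) ∈ σ} = {i} :=
    Set.eq_singleton_iff_unique_mem.mpr ⟨h, fun j hj => hσ _ hj _ h rfl⟩
  simp [assignOf, this]

theorem mem_iff_assignOfDefault_eq {σ : Set (AtomicChoice F P)} (hσ : Consistent σ) {d : ℕ}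
    {c : LPADClause F P} {j : ℕ} (hcj : (∃ i, (c, i) ∈ σ) ∨ j ≠ d) :
    (c, j) ∈ σ ↔ assignOfDefault σ d c = j := by
  by_cases hc : ∃ i, (c, i) ∈ σ
  · obtain ⟨i, hi⟩ := hc
    rw [assignOfDefault, if_pos ⟨i, hi⟩, assignOf_eq_of_mem hσ hi]
    exact ⟨fun h => hσ _ hi _ h rfl, fun h => h ▸ hi⟩
  · rw [assignOfDefault, if_neg hc]
    exact iff_of_false (fun h => hc ⟨j, h⟩) (hcj.resolve_left hc).symm

theorem exists_subset_iff_fK {σ : Set (AtomicChoice F P)} (hσ : Consistent σ) {d : ℕ}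
    {K : Set (Set (AtomicChoice F P))}
    (hK : ∀ κ ∈ K, ∀ ac ∈ κ, (∃ i, (ac.1, i) ∈ σ) ∨ ac.2 ≠ d) :
    (∃ κ ∈ K, κ ⊆ σ) ↔ fK K (assignOfDefault σ d) := by
  rw [fK]
  refine exists_congr fun κ => and_congr_right fun hκ =>
    ⟨fun h ac hac => ?_, fun h ac hac => ?_⟩
  · exact (mem_iff_assignOfDefault_eq hσ (hK κ hκ ac hac)).mp (h hac)
  · exact (mem_iff_assignOfDefault_eq hσ (hK κ hκ ac hac)).mpr (h ac hac)

theorem mem_omegaK_iff {S : Set (LPADClause F P)} {K : Set (Set (AtomicChoice F P))}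
    {σ : Set (AtomicChoice F P)} :
    σ ∈ omegaK S K ↔ σ ∈ Worlds S ∧ ∃ κ ∈ K, κ ⊆ σ := by
  simp only [omegaK, omegaC, Set.mem_iUnion₂, Set.mem_sep_iff]
  tauto

theorem mdd_paths_identify_same_worlds_general {F P : Type} (T : LPAD F P)
    (K : Set (Set (AtomicChoice F P))) (hK : ∀ κ ∈ K, Composite T.clauses κ)
    (M : MDD (LPADClause F P))
    (hrep : ∀ a : LPADClause F P → ℕ, (M.eval a = true) ↔ fK K a) :
    omegaK T.clauses K = omegaK T.clauses (pathsK M) := by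
  ext σ
  simp only [mem_omegaK_iff]
  refine and_congr_right fun hσ => ?_
  set a := assignOfDefault σ (sizeOf M)
  calc (∃ κ ∈ K, κ ⊆ σ)
      ↔ fK K a := exists_subset_iff_fK hσ.1.2 fun κ hκ ac hac =>
        .inl (hσ.2 _ ((hK κ hκ).1 ac hac).1)
    _ ↔ M.eval a = true := (hrep a).symm
    _ ↔ fK (pathsK M) a := MDD.eval_eq_true_iff
    _ ↔ ∃ κ ∈ pathsK M, κ ⊆ σ := (exists_subset_iff_fK hσ.1.2 fun _ hκ _ hac =>
        .inr (MDD.PathChoices.lt_sizeOf hκ _ hac).ne).symm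

/-- Let `K` be a set of explanations (composite choices) of an
LPAD `T` and let `M` be a multivalued decision diagram representing the Boolean
function `f_K`: for every assignment of values to the multivalued variables,
evaluating `M` returns the value of `f_K`.  Let
`K_M` be the set of composite choices obtained by interpreting each root-to-1-leaf
path of `M` as an explanation.  Then `K` and `K_M` identify the same set of
worlds: `ω_K = ω_{K_M}`. -/
theorem mdd_paths_identify_same_worlds {F P : Type} (T : LPAD F P)
    (K : Set (Set (AtomicChoice F P))) (hK : ∀ κ ∈ K, Composite T.clauses κ)
    (M : MDD (LPADClause F P)) (hro : M.ReadOnce)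
    (hrep : ∀ a : LPADClause F P → ℕ, (M.eval a = true) ↔ fK K a) :
    omegaK T.clauses K = omegaK T.clauses (pathsK M) :=
  mdd_paths_identify_same_worlds_general T K hK M hrep

end DistSem
end

section
/- Let P be a finitely recursive normal program. Then every ground atomic query Q to P is a bounded-term-size query, i.e., the program P_Q consisting of the clauses whose head atoms lie in the atomic search space of Q has the bounded-term-size property (even if P itself does not). -/
namespace DistSem

variable {F P : Type}

/-! ### Atom dependency graphs, atomic search spaces, and bounded-term-size
queries for normal programs -/

/-- The atom dependency graph of (the ground instantiation of) a normal program: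
there is an edge `(v₁, v₂)` iff some ground clause instance has head `v₁` and `v₂`
or `¬ v₂` in its body. -/
def DepEdge (Pr : NormalProgram F P) (v₁ v₂ : FOAtom F P) : Prop :=
  ∃ Cg ∈ instancesOf Pr, Cg.head = v₁ ∧ ∃ L ∈ Cg.body, L.atom = v₂

/-- The atomic search space of the atomic query `Q` (not necessarily ground): all
ground instances of `Q` together with all atoms reachable from them in the atom
dependency graph. -/
def searchSpace (Pr : NormalProgram F P) (Q : FOAtom F P) : Set (FOAtom F P) :=
  {A | ∃ A₀, Q.InstanceOf A₀ ∧ Relation.ReflTransGen (DepEdge Pr) A₀ A}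

/-- `P_Q`: the clauses (of the ground instantiation of `Pr`) whose head lies in
the atomic search space of `Q`. -/
def progQ (Pr : NormalProgram F P) (Q : FOAtom F P) : NormalProgram F P :=
  {Cg ∈ instancesOf Pr | Cg.head ∈ searchSpace Pr Q}

/-- `Q` is a bounded-term-size query to `Pr`: `P_Q` has the bounded-term-size
property. -/
def BTSQuery (Pr : NormalProgram F P) (Q : FOAtom F P) : Prop :=
  BTSProg (progQ Pr Q)

end DistSem

namespace DistSem

variable {F P : Type}

/-- `Pr` is finitely recursive: in the atom dependency graph of its ground
instantiation, only a finite number of vertices are reachable from any vertex. -/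
def FinitelyRecursive (Pr : NormalProgram F P) : Prop :=
  ∀ A : FOAtom F P, A.Ground → {B | Relation.ReflTransGen (DepEdge Pr) A B}.Finite

theorem FOTerm.subst_ground (θ : ℕ → FOTerm F) :
    ∀ t : FOTerm F, t.Ground → t.subst θ = t
  | .app f args, h => by
    have hargs : ∀ t ∈ args, FOTerm.Ground t := by cases h; assumption
    rw [FOTerm.subst]
    congr 1
    have key : ∀ x : {t // t ∈ args}, FOTerm.subst θ x.1 = x.1 := by
      intro x
      have := List.sizeOf_lt_of_mem x.2
      exact FOTerm.subst_ground θ x.1 (hargs x.1 x.2)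
    calc args.attach.map (fun t => FOTerm.subst θ t.1)
        = args.attach.map (fun t => t.1) := List.map_congr_left (fun x _ => key x)
      _ = args := List.attach_map_subtype_val args
  termination_by t => sizeOf t
  decreasing_by
    have := List.sizeOf_lt_of_mem x.2
    simp only [FOTerm.app.sizeOf_spec]
    omega

theorem FOAtom.subst_ground (θ : ℕ → FOTerm F) (A : FOAtom F P) (h : A.Ground) :
    A.subst θ = A := by
  cases A with
  | mk p args =>
    simp only [FOAtom.subst, FOAtom.mk.injEq, true_and]
    exact (List.map_congr_left fun t ht => FOTerm.subst_ground θ t (h t ht)).trans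
      (List.map_id args)

theorem Lit.subst_ground (θ : ℕ → FOTerm F) (L : Lit F P) (h : L.Ground) :
    L.subst θ = L := by
  cases L with
  | pos A => simp only [Lit.subst, FOAtom.subst_ground θ A h]
  | neg A => simp only [Lit.subst, FOAtom.subst_ground θ A h]

theorem Clause.subst_ground (θ : ℕ → FOTerm F) (C : Clause F P) (h : C.Ground) :
    C.subst θ = C := by
  cases C with
  | mk hd bd =>
    simp only [Clause.subst, Clause.mk.injEq]
    exact ⟨FOAtom.subst_ground θ hd h.1,
      (List.map_congr_left fun L hL => Lit.subst_ground θ L (h.2 L hL)).trans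
        (List.map_id bd)⟩

/-- Let `P` be a finitely recursive normal program (a finite
set of clauses over a language with finitely many function and constant symbols).
Then every ground atomic query `Q` to `P` is a bounded-term-size query: the
program `P_Q` consisting of the clauses whose head atoms lie in the atomic search
space of `Q` has the bounded-term-size property (even if `P` itself does not). -/
theorem finitely_recursive_ground_queries_are_bounded_term_size
    {F P : Type} [Finite F] [Finite P]
    (Pr : NormalProgram F P) (hfin : Pr.Finite) (hfr : FinitelyRecursive Pr)
    (Q : FOAtom F P) (hQ : Q.Ground) :
    BTSQuery Pr Q := by
  classical
  set S := searchSpace Pr Q with hSdef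
  -- the search space of a ground query is the set of atoms reachable from it
  have hSeq : S = {A | Relation.ReflTransGen (DepEdge Pr) Q A} := by
    ext A
    constructor
    · rintro ⟨A₀, ⟨hg, hcase⟩, hR⟩
      have hA₀ : A₀ = Q := by
        rcases hcase with rfl | ⟨θ, rfl⟩
        · rfl
        · exact FOAtom.subst_ground θ Q hQ
      rw [hA₀] at hR
      exact hR
    · intro h
      exact ⟨Q, ⟨hQ, Or.inl rfl⟩, h⟩
  have hS : S.Finite := by rw [hSeq]; exact hfr Q hQ
  -- instances of the (ground) program P_Q are members of P_Q
  have hsub : instancesOf (progQ Pr Q) ⊆ progQ Pr Q := by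
    rintro Cg ⟨C, hC, hCgG, hcase⟩
    have hCG : C.Ground := by
      obtain ⟨⟨C₀, _, hCG, _⟩, _⟩ := hC
      exact hCG
    have : Cg = C := by
      rcases hcase with rfl | ⟨θ, rfl⟩
      · rfl
      · exact Clause.subst_ground θ C hCG
    rw [this]; exact hC
  -- heads and body atoms of clauses of P_Q lie in the finite search space
  have hheadS : ∀ Cg ∈ progQ Pr Q, Cg.head ∈ S := fun Cg hCg => hCg.2
  have hbodyS : ∀ Cg ∈ progQ Pr Q, ∀ L ∈ Cg.body, L.atom ∈ S := by
    intro Cg hCg L hL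
    have hhead : Relation.ReflTransGen (DepEdge Pr) Q Cg.head := by
      have := hheadS Cg hCg; rwa [hSeq] at this
    rw [hSeq]
    exact hhead.tail ⟨Cg, hCg.1, rfl, L, hL, rfl⟩
  -- bound on the body lengths
  obtain ⟨N, hN⟩ : ∃ N, ∀ C ∈ Pr, C.body.length ≤ N := by
    obtain ⟨N, hN⟩ := (hfin.image fun C : Clause F P => C.body.length).bddAbove
    exact ⟨N, fun C hC => hN ⟨C, hC, rfl⟩⟩
  have hlen : ∀ Cg ∈ progQ Pr Q, Cg.body.length ≤ N := by
    rintro Cg ⟨⟨C, hC, _, hcase⟩, _⟩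
    rcases hcase with heq | ⟨θ, heq⟩
    · rw [heq]; exact hN _ hC
    · rw [heq]; simpa [Clause.subst] using hN _ hC
  -- the literals with atom in S form a finite set
  set litS : Set (Lit F P) := {L | L.atom ∈ S} with hlitSdef
  have hlitS : litS.Finite := by
    apply Set.Finite.subset ((hS.image Lit.pos).union (hS.image Lit.neg))
    intro L hL
    cases L with
    | pos A => exact Or.inl ⟨A, hL, rfl⟩
    | neg A => exact Or.inr ⟨A, hL, rfl⟩
  -- the possible bodies form a finite set
  set listSet : Set (List (Lit F P)) :=
    {b | b.length ≤ N ∧ ∀ L ∈ b, L ∈ litS} with hlistSetdef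
  have hlistSet : listSet.Finite := by
    haveI : Finite ↥litS := hlitS.to_subtype
    apply Set.Finite.subset
      (((List.finite_length_le ↥litS N).image (List.map (Subtype.val))))
    rintro b ⟨hblen, hbmem⟩
    refine ⟨b.pmap (fun L h => (⟨L, h⟩ : ↥litS)) hbmem, by simpa using hblen, ?_⟩
    rw [List.map_pmap]
    simp
  -- hence P_Q is a finite set of clauses
  have hPQ : (progQ Pr Q).Finite := by
    apply Set.Finite.subset
      (((hS.prod hlistSet).image fun p : FOAtom F P × List (Lit F P) => ⟨p.1, p.2⟩))
    intro Cg hCg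
    exact ⟨(Cg.head, Cg.body), ⟨hheadS Cg hCg, hlen Cg hCg, hbodyS Cg hCg⟩, rfl⟩
  -- so the sizes of its clauses are bounded
  obtain ⟨L, hL⟩ := (hPQ.image sizeOf).bddAbove
  refine ⟨L + 1, ?_⟩
  rintro o Tr _ Cg ⟨hmem, _, _, _⟩
  have : sizeOf Cg ≤ L := hL ⟨Cg, hsub hmem, rfl⟩
  omega

end DistSem
end
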